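/- arXiv:1501.02090 — 4 statements merged into one kernel-verified Lean document; each statement's English description precedes it below -/
import Mathlib

section
/- Let x_1,…,x_N ∈ S², w_1,…,w_N > 0 and Y_1,…,Y_m : S² → ℝ form a discretely orthonormal system, let α > 0, β_1,…,β_m > 0, and let y^ε_1,…,y^ε_N ∈ ℝ be given data values. Define F : ℝ^m → ℝ by F(γ) = Σ_{i=1}^N w_i (Σ_{a=1}^m γ_a Y_a(x_i) − y^ε_i)² + α Σ_{i=1}^N w_i (Σ_{a=1}^m β_a γ_a Y_a(x_i))². Then F has a unique global minimizer γ* on ℝ^m, whose components are γ*_a = (1+αβ_a²)^{-1} Σ_{i=1}^N w_i Y_a(x_i) y^ε_i; that is, F(γ*) ≤ F(γ) for all γ ∈ ℝ^m, with equality only when γ = γ*. -/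
open scoped BigOperators

abbrev S2 : Type := Metric.sphere (0 : EuclideanSpace ℝ (Fin 3)) 1

/-!
Orthonormality turns both quadratic terms of the functional into Euclidean norms of coefficient
vectors, `Σ_i w_i (Σ_a u_a Y_a(x_i))² = Σ_a u_a²`, so the functional decouples into the scalar
quadratics `(1 + α β_a²) γ_a² - 2 γ_a c_a` with `c_a = Σ_i w_i Y_a(x_i) y_i`. Completing the
square gives `F γ - F γ* = Σ_a (1 + α β_a²) (γ_a - γ*_a)²`, a positive definite form in `γ - γ*`.
-/

open Finset

section DiscretelyOrthonormal

variable {ι κ : Type*} [Fintype ι] [Fintype κ]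

/-- Here `v a i` stands for `Y_a(x_i)`. -/
def DiscretelyOrthonormal [DecidableEq κ] (w : ι → ℝ) (v : κ → ι → ℝ) : Prop :=
  ∀ a b, ∑ i, w i * v a i * v b i = if a = b then 1 else 0

theorem DiscretelyOrthonormal.sum_mul_sum_sq [DecidableEq κ] {w : ι → ℝ} {v : κ → ι → ℝ}
    (hv : DiscretelyOrthonormal w v) (u : κ → ℝ) :
    ∑ i, w i * (∑ a, u a * v a i) ^ 2 = ∑ a, u a ^ 2 := by
  calc ∑ i, w i * (∑ a, u a * v a i) ^ 2
      = ∑ i, ∑ a, ∑ b, u a * u b * (w i * v a i * v b i) := by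
        refine sum_congr rfl fun i _ => ?_
        rw [sq, sum_mul_sum, mul_sum]
        exact sum_congr rfl fun a _ => by rw [mul_sum]; exact sum_congr rfl fun b _ => by ring
    _ = ∑ a, ∑ b, u a * u b * ∑ i, w i * v a i * v b i := by
        rw [sum_comm]
        exact sum_congr rfl fun a _ => by rw [sum_comm]; simp only [mul_sum]
    _ = ∑ a, u a ^ 2 := by simp [hv _ _, sq]

theorem sum_mul_sum_mul_eq_sum_mul_sum (w y : ι → ℝ) (v : κ → ι → ℝ) (u : κ → ℝ) :
    ∑ i, w i * (∑ a, u a * v a i) * y i = ∑ a, u a * ∑ i, w i * v a i * y i := by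
  simp only [mul_sum, sum_mul]
  rw [sum_comm]
  exact sum_congr rfl fun a _ => sum_congr rfl fun i _ => by ring

def regularizedLeastSquares (w : ι → ℝ) (v : κ → ι → ℝ) (α : ℝ) (β : κ → ℝ) (y : ι → ℝ)
    (γ : κ → ℝ) : ℝ :=
  ∑ i, w i * (∑ a, γ a * v a i - y i) ^ 2 + α * ∑ i, w i * (∑ a, β a * γ a * v a i) ^ 2

theorem DiscretelyOrthonormal.regularizedLeastSquares_eq [DecidableEq κ] {w : ι → ℝ}
    {v : κ → ι → ℝ} (hv : DiscretelyOrthonormal w v) (α : ℝ) (β : κ → ℝ) (y : ι → ℝ)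
    (γ : κ → ℝ) :
    regularizedLeastSquares w v α β y γ =
      ∑ a, ((1 + α * β a ^ 2) * γ a ^ 2 - 2 * γ a * ∑ i, w i * v a i * y i)
        + ∑ i, w i * y i ^ 2 := by
  have expand_sq : ∀ i, w i * (∑ a, γ a * v a i - y i) ^ 2 =
      w i * (∑ a, γ a * v a i) ^ 2 - 2 * (w i * (∑ a, γ a * v a i) * y i) + w i * y i ^ 2 :=
    fun i => by ring
  rw [regularizedLeastSquares, sum_congr rfl fun i _ => expand_sq i, sum_add_distrib,
    sum_sub_distrib, ← mul_sum, hv.sum_mul_sum_sq, hv.sum_mul_sum_sq (fun a => β a * γ a),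
    sum_mul_sum_mul_eq_sum_mul_sum, mul_sum, mul_sum]
  have decouple : ∑ a, ((1 + α * β a ^ 2) * γ a ^ 2 - 2 * γ a * ∑ i, w i * v a i * y i) =
      ∑ a, γ a ^ 2 + ∑ a, α * (β a * γ a) ^ 2 - ∑ a, 2 * (γ a * ∑ i, w i * v a i * y i) := by
    rw [← sum_add_distrib, ← sum_sub_distrib]
    exact sum_congr rfl fun a _ => by ring
  rw [decouple]
  ring

theorem DiscretelyOrthonormal.regularizedLeastSquares_sub_eq [DecidableEq κ] {w : ι → ℝ}
    {v : κ → ι → ℝ} (hv : DiscretelyOrthonormal w v) (α : ℝ) (β : κ → ℝ) (y : ι → ℝ)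
    {γ' : κ → ℝ} (hγ' : ∀ a, (1 + α * β a ^ 2) * γ' a = ∑ i, w i * v a i * y i) (γ : κ → ℝ) :
    regularizedLeastSquares w v α β y γ - regularizedLeastSquares w v α β y γ' =
      ∑ a, (1 + α * β a ^ 2) * (γ a - γ' a) ^ 2 := by
  rw [hv.regularizedLeastSquares_eq, hv.regularizedLeastSquares_eq, add_sub_add_right_eq_sub,
    ← sum_sub_distrib]
  exact sum_congr rfl fun a _ => by rw [← hγ']; ring

end DiscretelyOrthonormal

theorem sum_mul_sq_eq_zero_iff {κ : Type*} [Fintype κ] {d z : κ → ℝ} (hd : ∀ a, 0 < d a) :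
    ∑ a, d a * z a ^ 2 = 0 ↔ z = 0 := by
  rw [sum_eq_zero_iff_of_nonneg fun a _ => by have := hd a; positivity]
  simp [funext_iff, (hd _).ne']

theorem regularized_least_squares_unique_minimizer_general
    (N m : ℕ) (x : Fin N → S2) (w : Fin N → ℝ)
    (Y : Fin m → S2 → ℝ)
    (horth : ∀ a b : Fin m,
      ∑ i, w i * Y a (x i) * Y b (x i) = if a = b then 1 else 0)
    (α : ℝ) (hα : 0 < α) (β : Fin m → ℝ)
    (yε : Fin N → ℝ)
    (F : (Fin m → ℝ) → ℝ)
    (hF : ∀ γ : Fin m → ℝ,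
      F γ = ∑ i, w i * (∑ a, γ a * Y a (x i) - yε i) ^ 2
        + α * ∑ i, w i * (∑ a, β a * γ a * Y a (x i)) ^ 2)
    (γstar : Fin m → ℝ)
    (hγstar : ∀ a, γstar a = (1 + α * β a ^ 2)⁻¹ * ∑ i, w i * Y a (x i) * yε i) :
    ∀ γ : Fin m → ℝ, F γstar ≤ F γ ∧ (F γ = F γstar → γ = γstar) := by
  have hv : DiscretelyOrthonormal w fun a i => Y a (x i) := horth
  have hd : ∀ a, 0 < 1 + α * β a ^ 2 := fun a => by positivity
  have hcrit : ∀ a, (1 + α * β a ^ 2) * γstar a = ∑ i, w i * Y a (x i) * yε i := fun a => by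
    rw [hγstar, mul_inv_cancel_left₀ (hd a).ne']
  obtain rfl : F = regularizedLeastSquares w (fun a i => Y a (x i)) α β yε := funext hF
  intro γ
  have hgap := hv.regularizedLeastSquares_sub_eq α β yε hcrit γ
  refine ⟨sub_nonneg.mp (hgap ▸ sum_nonneg fun a _ => by have := hd a; positivity), fun heq => ?_⟩
  rw [heq, sub_self, eq_comm, sum_mul_sq_eq_zero_iff hd] at hgap
  exact funext fun a => sub_eq_zero.mp (congrFun hgap a)

/-- Unique global minimizer of the regularized weighted least-squares functional,
with explicitly given components. -/
theorem regularized_least_squares_unique_minimizer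
    (N m : ℕ) (x : Fin N → S2) (w : Fin N → ℝ) (hw : ∀ i, 0 < w i)
    (Y : Fin m → S2 → ℝ)
    (horth : ∀ a b : Fin m,
      ∑ i, w i * Y a (x i) * Y b (x i) = if a = b then 1 else 0)
    (α : ℝ) (hα : 0 < α) (β : Fin m → ℝ) (hβ : ∀ a, 0 < β a)
    (yε : Fin N → ℝ)
    (F : (Fin m → ℝ) → ℝ)
    (hF : ∀ γ : Fin m → ℝ,
      F γ = ∑ i, w i * (∑ a, γ a * Y a (x i) - yε i) ^ 2
        + α * ∑ i, w i * (∑ a, β a * γ a * Y a (x i)) ^ 2)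
    (γstar : Fin m → ℝ)
    (hγstar : ∀ a, γstar a = (1 + α * β a ^ 2)⁻¹ * ∑ i, w i * Y a (x i) * yε i) :
    ∀ γ : Fin m → ℝ, F γstar ≤ F γ ∧ (F γ = F γstar → γ = γstar) :=
  regularized_least_squares_unique_minimizer_general N m x w Y horth α hα β yε F hF γstar hγstar
end

section
/- Let M ∈ ℕ, α ≥ 0, β_0,…,β_M > 0, let x_1,…,x_N ∈ S² be pairwise distinct points and w_1,…,w_N > 0, and define the operator T_{α,M}^β on C(S²) by (T_{α,M}^β f)(x) = Σ_{k=0}^M (2k+1)/(4π(1+αβ_k²)) Σ_{i=1}^N w_i P_k(x·x_i) f(x_i). Then T_{α,M}^β is a bounded linear operator from C(S²) to C(S²) whose operator norm equals max_{x∈S²} Σ_{i=1}^N w_i |Σ_{k=0}^M (2k+1)/(4π(1+αβ_k²)) P_k(x·x_i)|, and this quantity is bounded above by max_{x∈S²} Σ_{i=1}^N w_i Σ_{k=0}^M (2k+1)/(4π(1+αβ_k²)) |P_k(x·x_i)|. -/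
open scoped BigOperators
open Polynomial

noncomputable section

/-- The degree-`k` Legendre polynomial, via Rodrigues' formula
`P_k(t) = (1/(2^k k!)) (d/dt)^k (t² − 1)^k`, normalized so that `P_k(1) = 1`. -/
def legendreP (k : ℕ) : Polynomial ℝ :=
  ((1 : ℝ) / (2 ^ k * k.factorial)) •
    ((fun p : Polynomial ℝ => Polynomial.derivative p)^[k] ((X ^ 2 - 1) ^ k))

/-! Writing `a_i(z) = w_i Σ_k d_k P_k(z·x_i)`, the operator is `f ↦ Σ_i f(x_i) a_i`, so
`|Tf(z)| ≤ Σ_i |a_i(z)| ‖f‖`. Conversely, for a fixed `z`, Tietze's extension theorem gives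
`f` with `‖f‖ ≤ 1` taking the value `sign a_i(z)` at each of the distinct nodes `x_i`, and then
`Tf(z) = Σ_i |a_i(z)|`. The final bound is the triangle inequality, as the coefficients
`d_k = (2k+1)/(4π(1+αβ_k²))` are nonnegative once `α ≥ 0`. -/

namespace ContinuousMap

open Function Set

variable {X ι : Type*} [TopologicalSpace X]

theorem exists_forall_mem_apply_eq_of_injective [NormalSpace X] [T1Space X] [Finite ι]
    {x : ι → X} (hx : Injective x) {t : Set ℝ} [OrdConnected t] (ht : t.Nonempty)
    {s : ι → ℝ} (hs : ∀ i, s i ∈ t) :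
    ∃ f : C(X, ℝ), (∀ y, f y ∈ t) ∧ ∀ i, f (x i) = s i := by
  let f₀ : C(range x, ℝ) :=
    ⟨fun p => s ((Equiv.ofInjective x hx).symm p), continuous_of_discreteTopology⟩
  obtain ⟨f, hft, hf⟩ := exists_restrict_eq_forall_mem_of_closed f₀ (fun p => hs _) ht
    (finite_range x).isClosed
  refine ⟨f, hft, fun i => ?_⟩
  have := congr($hf ⟨x i, mem_range_self i⟩)
  simpa [f₀, Equiv.ofInjective_symm_apply] using this

variable [Fintype ι]

def sumEvalSMulCLM (x : ι → X) (a : ι → C(X, ℝ)) : C(X, ℝ) →L[ℝ] C(X, ℝ) :=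
  ∑ i, (evalCLM ℝ (x i)).smulRight (a i)

@[simp]
theorem sumEvalSMulCLM_apply (x : ι → X) (a : ι → C(X, ℝ)) (f : C(X, ℝ)) (z : X) :
    sumEvalSMulCLM x a f z = ∑ i, f (x i) * a i z := by
  simp [sumEvalSMulCLM]

variable [CompactSpace X]

theorem abs_sumEvalSMulCLM_apply_le (x : ι → X) (a : ι → C(X, ℝ)) (f : C(X, ℝ)) (z : X) :
    |sumEvalSMulCLM x a f z| ≤ (∑ i, |a i z|) * ‖f‖ := by
  rw [sumEvalSMulCLM_apply, Finset.sum_mul]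
  refine (Finset.abs_sum_le_sum_abs _ _).trans (Finset.sum_le_sum fun i _ => ?_)
  rw [abs_mul, mul_comm]
  exact mul_le_mul_of_nonneg_left (f.norm_coe_le_norm (x i)) (abs_nonneg _)

theorem exists_norm_le_one_sumEvalSMulCLM_apply_eq [T2Space X] {x : ι → X} (hx : Injective x)
    (a : ι → C(X, ℝ)) (z : X) :
    ∃ f : C(X, ℝ), ‖f‖ ≤ 1 ∧ sumEvalSMulCLM x a f z = ∑ i, |a i z| := by
  have h_sign (r : ℝ) : (SignType.sign r : ℝ) ∈ Icc (-1) 1 := by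
    rcases lt_trichotomy r 0 with h | h | h <;> simp [h]
  obtain ⟨f, hf_mem, hf⟩ := exists_forall_mem_apply_eq_of_injective hx
    (nonempty_Icc.2 (by norm_num)) fun i => h_sign (a i z)
  refine ⟨f, (norm_le _ zero_le_one).2 fun y => abs_le.2 (hf_mem y), ?_⟩
  simp [hf, mul_comm, self_mul_sign]

theorem norm_sumEvalSMulCLM [T2Space X] {x : ι → X} (hx : Injective x) (a : ι → C(X, ℝ)) :
    ‖sumEvalSMulCLM x a‖ = ⨆ z, ∑ i, |a i z| := by
  set T := sumEvalSMulCLM x a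
  let g : C(X, ℝ) := ⟨fun z => ∑ i, |a i z|, by fun_prop⟩
  have hg : ‖g‖ = ⨆ z, ∑ i, |a i z| := by
    simp only [norm_eq_iSup_norm, Real.norm_eq_abs]
    congr! with z
    exact abs_of_nonneg (Finset.sum_nonneg fun i _ => abs_nonneg _)
  rw [← hg]
  refine le_antisymm (T.opNorm_le_bound (norm_nonneg g) fun f => (norm_le _ (by positivity)).2
    fun z => ?_) ((norm_le _ (norm_nonneg T)).2 fun z => ?_)
  · calc ‖T f z‖ ≤ (∑ i, |a i z|) * ‖f‖ := abs_sumEvalSMulCLM_apply_le x a f z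
      _ ≤ ‖g‖ * ‖f‖ := by gcongr; exact (le_abs_self _).trans (g.norm_coe_le_norm z)
  · obtain ⟨f, hf_norm, hf⟩ := exists_norm_le_one_sumEvalSMulCLM_apply_eq hx a z
    calc ‖g z‖ = ‖T f z‖ := by rw [hf]; rfl
      _ ≤ ‖T f‖ := (T f).norm_coe_le_norm z
      _ ≤ ‖T‖ := (T.le_of_opNorm_le_of_le le_rfl hf_norm).trans_eq (mul_one _)

end ContinuousMap

theorem regularized_operator_norm_general
    (M N : ℕ) (α : ℝ) (hα : 0 ≤ α)
    (β : ℕ → ℝ)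
    (x : Fin N → S2) (hx : Function.Injective x)
    (w : Fin N → ℝ) (hw : ∀ i, 0 < w i) :
    ∃ T : C(S2, ℝ) →L[ℝ] C(S2, ℝ),
      (∀ (f : C(S2, ℝ)) (z : S2),
        T f z = ∑ k ∈ Finset.range (M + 1),
          (2 * (k : ℝ) + 1) / (4 * Real.pi * (1 + α * β k ^ 2)) *
            ∑ i, w i * (legendreP k).eval
              (inner ℝ (z : EuclideanSpace ℝ (Fin 3)) (x i : EuclideanSpace ℝ (Fin 3)) : ℝ)
              * f (x i)) ∧
      ‖T‖ = (⨆ z : S2, ∑ i, w i *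
          |∑ k ∈ Finset.range (M + 1),
            (2 * (k : ℝ) + 1) / (4 * Real.pi * (1 + α * β k ^ 2)) *
              (legendreP k).eval
                (inner ℝ (z : EuclideanSpace ℝ (Fin 3)) (x i : EuclideanSpace ℝ (Fin 3)) : ℝ)|) ∧
      (⨆ z : S2, ∑ i, w i *
          |∑ k ∈ Finset.range (M + 1),
            (2 * (k : ℝ) + 1) / (4 * Real.pi * (1 + α * β k ^ 2)) *
              (legendreP k).eval
                (inner ℝ (z : EuclideanSpace ℝ (Fin 3)) (x i : EuclideanSpace ℝ (Fin 3)) : ℝ)|)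
        ≤ ⨆ z : S2, ∑ i, w i *
            ∑ k ∈ Finset.range (M + 1),
              (2 * (k : ℝ) + 1) / (4 * Real.pi * (1 + α * β k ^ 2)) *
                |(legendreP k).eval
                  (inner ℝ (z : EuclideanSpace ℝ (Fin 3)) (x i : EuclideanSpace ℝ (Fin 3)) : ℝ)| := by
  let d : ℕ → ℝ := fun k => (2 * (k : ℝ) + 1) / (4 * Real.pi * (1 + α * β k ^ 2))
  have hd (k : ℕ) : 0 ≤ d k := by positivity
  let P (k : ℕ) (i : Fin N) : C(S2, ℝ) :=
    ⟨fun z => (legendreP k).eval (inner ℝ (z : EuclideanSpace ℝ (Fin 3)) (x i)),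
      by fun_prop⟩
  refine ⟨ContinuousMap.sumEvalSMulCLM x
    fun i => w i • ∑ k ∈ Finset.range (M + 1), d k • P k i, fun f z => ?_, ?_, ?_⟩
  · simp only [ContinuousMap.sumEvalSMulCLM_apply, ContinuousMap.smul_apply,
      ContinuousMap.coe_sum, Finset.sum_apply, smul_eq_mul, Finset.mul_sum]
    rw [Finset.sum_comm]
    exact Finset.sum_congr rfl fun k _ => Finset.sum_congr rfl fun i _ => by
      simp only [P, d, ContinuousMap.coe_mk]; ring
  · rw [ContinuousMap.norm_sumEvalSMulCLM hx]
    congr! 3 with z i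
    simp [abs_mul, abs_of_pos (hw i), P, d]
  · refine ciSup_mono ?_ fun z => Finset.sum_le_sum fun i _ =>
      mul_le_mul_of_nonneg_left ((Finset.abs_sum_le_sum_abs _ _).trans_eq ?_) (hw i).le
    · exact (isCompact_range (by fun_prop)).bddAbove
    · exact Finset.sum_congr rfl fun k _ => by rw [abs_mul, abs_of_nonneg (hd k)]

/-- Theorem 4.1 of the paper: the norm of the regularized least-squares operator
`T_{α,M}^β` on `C(S²)` equals `max_x Σ_i w_i |Σ_k (2k+1)/(4π(1+αβ_k²)) P_k(x·x_i)|`,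
which is bounded by `max_x Σ_i w_i Σ_k (2k+1)/(4π(1+αβ_k²)) |P_k(x·x_i)|`. -/
theorem regularized_operator_norm
    (M N : ℕ) (α : ℝ) (hα : 0 ≤ α)
    (β : ℕ → ℝ) (hβ : ∀ k ≤ M, 0 < β k)
    (x : Fin N → S2) (hx : Function.Injective x)
    (w : Fin N → ℝ) (hw : ∀ i, 0 < w i) :
    ∃ T : C(S2, ℝ) →L[ℝ] C(S2, ℝ),
      (∀ (f : C(S2, ℝ)) (z : S2),
        T f z = ∑ k ∈ Finset.range (M + 1),
          (2 * (k : ℝ) + 1) / (4 * Real.pi * (1 + α * β k ^ 2)) *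
            ∑ i, w i * (legendreP k).eval
              (inner ℝ (z : EuclideanSpace ℝ (Fin 3)) (x i : EuclideanSpace ℝ (Fin 3)) : ℝ)
              * f (x i)) ∧
      ‖T‖ = (⨆ z : S2, ∑ i, w i *
          |∑ k ∈ Finset.range (M + 1),
            (2 * (k : ℝ) + 1) / (4 * Real.pi * (1 + α * β k ^ 2)) *
              (legendreP k).eval
                (inner ℝ (z : EuclideanSpace ℝ (Fin 3)) (x i : EuclideanSpace ℝ (Fin 3)) : ℝ)|) ∧
      (⨆ z : S2, ∑ i, w i *
          |∑ k ∈ Finset.range (M + 1),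
            (2 * (k : ℝ) + 1) / (4 * Real.pi * (1 + α * β k ^ 2)) *
              (legendreP k).eval
                (inner ℝ (z : EuclideanSpace ℝ (Fin 3)) (x i : EuclideanSpace ℝ (Fin 3)) : ℝ)|)
        ≤ ⨆ z : S2, ∑ i, w i *
            ∑ k ∈ Finset.range (M + 1),
              (2 * (k : ℝ) + 1) / (4 * Real.pi * (1 + α * β k ^ 2)) *
                |(legendreP k).eval
                  (inner ℝ (z : EuclideanSpace ℝ (Fin 3)) (x i : EuclideanSpace ℝ (Fin 3)) : ℝ)| :=
  regularized_operator_norm_general M N α hα β x hx w hw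

end
end

section
/- Let M ≥ 1 and, for 0 ≤ k ≤ M and 1 ≤ j ≤ 2k+1, let Y_{k,j} : S² → ℝ be continuous functions that are orthonormal in L²(S²) and satisfy the discrete orthonormality Σ_{i=1}^N w_i Y_{k,j}(x_i) Y_{κ,ι}(x_i) = δ_{kκ} δ_{jι} for points x_1,…,x_N ∈ S² and weights w_1,…,w_N > 0. Let 0 < β_0 ≤ β_1 ≤ … ≤ β_M, let α > 0, let h : [0, ∞) → [0, 1], and let φ : [0, ∞) → [0, ∞) be nondecreasing with φ(0) = 0 and φ(u) > 0 for u > 0. Suppose the Nikolskii-type inequality holds: there is C > 0 such that ‖Σ_{k=0}^M Σ_{j=1}^{2k+1} c_{k,j} Y_{k,j}‖_{C(S²)} ≤ C M (Σ_{k,j} c_{k,j}²)^{1/2} for all real coefficients c_{k,j}. For y ∈ C(S²) define V_M y = Σ_{k=0}^M h(k/M) Σ_{j=1}^{2k+1} ⟨Y_{k,j}, y⟩_{L²(S²)} Y_{k,j}, and define T_α g = Σ_{k=0}^M Σ_{j=1}^{2k+1} (1+αβ_k²)^{-1} (Σ_{i=1}^N w_i Y_{k,j}(x_i) g(x_i))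 Y_{k,j}, with T_0 the case α = 0. Then ‖(T_0 − T_α) V_M y‖_{C(S²)} ≤ C M · (sup_{u ∈ [0, β_0^{-2}]} α φ(u)/(α+u)) · (Σ_{k=0}^M Σ_{j=1}^{2k+1} ⟨Y_{k,j}, y⟩²_{L²(S²)} / φ(β_k^{-2})²)^{1/2}. -/
open scoped BigOperators
open MeasureTheory

noncomputable section

/-!
Both `T₀` and `T_α` are diagonal in the basis `Y_{k,j}`: by the discrete orthonormality the
quadrature coefficients of `V_M y` are `h(k/M) ⟨Y_{k,j}, y⟩`, so `(T₀ − T_α) V_M y` is the expansion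
with coefficients `α/(α + β_k⁻²) · h(k/M) ⟨Y_{k,j}, y⟩`. Since `β_k⁻² ∈ (0, β₀⁻²]`, the factor
`α/(α + β_k⁻²)` is at most `S / φ(β_k⁻²)`, where `S` is the supremum in the bound, and `|h| ≤ 1`;
the Nikolskii inequality turns this coefficientwise estimate into the uniform one.
-/

section DiscreteOrthonormality

variable {X ι ν : Type*} [TopologicalSpace X] [Fintype ι] [Fintype ν] {κ : ι → Type*}
  [∀ k, Fintype (κ k)] [DecidableEq (Σ k, κ k)]

theorem quadrature_inner_sum_smul {Y : (k : ι) → κ k → C(X, ℝ)} {x : ν → X} {w : ν → ℝ}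
    (hdisc : ∀ (k k' : ι) (j : κ k) (j' : κ k'),
      ∑ i, w i * Y k j (x i) * Y k' j' (x i) =
        if (⟨k, j⟩ : Σ k, κ k) = ⟨k', j'⟩ then 1 else 0)
    (a : (k : ι) → κ k → ℝ) (k : ι) (j : κ k) :
    ∑ i, w i * Y k j (x i) * (∑ k', ∑ j', a k' j' • Y k' j') (x i) = a k j := by
  calc ∑ i, w i * Y k j (x i) * (∑ k', ∑ j', a k' j' • Y k' j') (x i)
      = ∑ k', ∑ j', a k' j' * ∑ i, w i * Y k j (x i) * Y k' j' (x i) := by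
        simp only [ContinuousMap.coe_sum, ContinuousMap.coe_smul, Finset.sum_apply,
          Pi.smul_apply, smul_eq_mul, Finset.mul_sum]
        rw [Finset.sum_comm]
        refine Finset.sum_congr rfl fun k' _ => ?_
        rw [Finset.sum_comm]
        exact Finset.sum_congr rfl fun j' _ => Finset.sum_congr rfl fun i _ => by ring
    _ = a k j := by
        simp only [hdisc, mul_ite, mul_one, mul_zero]
        rw [Finset.sum_sigma']
        simp

end DiscreteOrthonormality

theorem sqrt_sum_sum_sq_le_mul {ι : Type*} [Fintype ι] {κ : ι → Type*} [∀ k, Fintype (κ k)]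
    {a b : (k : ι) → κ k → ℝ} {S : ℝ} (hS : 0 ≤ S) (hab : ∀ k j, |a k j| ≤ S * |b k j|) :
    √(∑ k, ∑ j, a k j ^ 2) ≤ S * √(∑ k, ∑ j, b k j ^ 2) := by
  rw [← Real.sqrt_sq hS, ← Real.sqrt_mul (sq_nonneg S), Finset.mul_sum]
  refine Real.sqrt_le_sqrt (Finset.sum_le_sum fun k _ => ?_)
  rw [Finset.mul_sum]
  refine Finset.sum_le_sum fun j _ => ?_
  rw [← mul_pow]
  exact sq_le_sq.mpr ((hab k j).trans_eq (by rw [abs_mul, abs_of_nonneg hS]))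

theorem one_sub_inv_one_add_mul_sq {α β : ℝ} (hα : 0 ≤ α) (hβ : β ≠ 0) :
    1 - (1 + α * β ^ 2)⁻¹ = α / (α + (β ^ 2)⁻¹) := by
  have : 0 < 1 + α * β ^ 2 := by positivity
  field_simp
  ring

section FilterSupremum

variable {φ : ℝ → ℝ} {α b : ℝ}

theorem bddAbove_range_mul_div_add (hα : 0 ≤ α) (hφ0 : 0 ≤ φ 0)
    (hφ : MonotoneOn φ (Set.Ici 0)) :
    BddAbove (Set.range fun v : Set.Icc (0 : ℝ) b => α * φ v / (α + (v : ℝ))) := by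
  refine ⟨φ b, ?_⟩
  rintro _ ⟨⟨v, hv0, hvb⟩, rfl⟩
  have hφv : 0 ≤ φ v := hφ0.trans (hφ (Set.mem_Ici.mpr le_rfl) hv0 hv0)
  calc α * φ v / (α + v) = α / (α + v) * φ v := by ring
    _ ≤ φ v := mul_le_of_le_one_left hφv (div_le_one_of_le₀ (by linarith) (by positivity))
    _ ≤ φ b := hφ hv0 (hv0.trans hvb) hvb

theorem mul_div_add_le_ciSup (hα : 0 ≤ α) (hφ0 : 0 ≤ φ 0) (hφ : MonotoneOn φ (Set.Ici 0))
    {u : ℝ} (hu : u ∈ Set.Icc 0 b) :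
    α * φ u / (α + u) ≤ ⨆ v : Set.Icc (0 : ℝ) b, α * φ v / (α + (v : ℝ)) :=
  le_ciSup (f := fun v : Set.Icc (0 : ℝ) b => α * φ v / (α + (v : ℝ)))
    (bddAbove_range_mul_div_add hα hφ0 hφ) ⟨u, hu⟩

end FilterSupremum

theorem abs_mul_div_add_mul_le {α u φu S t c : ℝ} (hα : 0 ≤ α) (hu : 0 ≤ u) (hφu : 0 < φu)
    (hS : α * φu / (α + u) ≤ S) (ht : |t| ≤ 1) :
    |α / (α + u) * (t * c)| ≤ S * |c / φu| := by
  have hfactor : α / (α + u) ≤ S / φu := by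
    rw [le_div_iff₀ hφu]
    exact (mul_div_right_comm α φu (α + u)).symm.le.trans hS
  rw [abs_mul, abs_mul, abs_of_nonneg (by positivity : 0 ≤ α / (α + u)), abs_div, abs_of_pos hφu]
  calc α / (α + u) * (|t| * |c|) ≤ S / φu * (1 * |c|) := by
        gcongr
        exact (by positivity : 0 ≤ α / (α + u)).trans hfactor
    _ = S * (|c| / φu) := by ring

theorem regularization_error_bound_general
    (M N : ℕ)
    (Y : (k : Fin (M + 1)) → Fin (2 * (k : ℕ) + 1) → C(S2, ℝ))
    (x : Fin N → S2) (w : Fin N → ℝ)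
    (hdisc : ∀ (k k' : Fin (M + 1)) (j : Fin (2 * (k : ℕ) + 1)) (j' : Fin (2 * (k' : ℕ) + 1)),
      (∑ i, w i * Y k j (x i) * Y k' j' (x i)) =
        if (⟨k, j⟩ : Σ k : Fin (M + 1), Fin (2 * (k : ℕ) + 1)) = ⟨k', j'⟩ then 1 else 0)
    (β : Fin (M + 1) → ℝ) (hβ0 : 0 < β 0) (hβmono : Monotone β)
    (α : ℝ) (hα : 0 < α)
    (h : ℝ → ℝ) (hh : ∀ t, 0 ≤ t → h t ∈ Set.Icc (0 : ℝ) 1)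
    (φ : ℝ → ℝ) (hφ0 : φ 0 = 0)
    (hφmono : ∀ s t, 0 ≤ s → s ≤ t → φ s ≤ φ t)
    (hφpos : ∀ u, 0 < u → 0 < φ u)
    (C : ℝ) (hC : 0 < C)
    (hNikolskii : ∀ c : (k : Fin (M + 1)) → Fin (2 * (k : ℕ) + 1) → ℝ,
      ‖∑ k, ∑ j, c k j • Y k j‖ ≤ C * M * Real.sqrt (∑ k, ∑ j, c k j ^ 2))
    (y : C(S2, ℝ))
    (Vy : C(S2, ℝ))
    (hVy : Vy = ∑ k : Fin (M + 1), ∑ j,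
      (h (((k : ℕ) : ℝ) / M) * ∫ z : S2, Y k j z * y z ∂(μH[2])) • Y k j)
    (T0Vy TαVy : C(S2, ℝ))
    (hT0Vy : T0Vy = ∑ k, ∑ j, (∑ i, w i * Y k j (x i) * Vy (x i)) • Y k j)
    (hTαVy : TαVy = ∑ k, ∑ j,
      ((1 + α * β k ^ 2)⁻¹ * ∑ i, w i * Y k j (x i) * Vy (x i)) • Y k j) :
    ‖T0Vy - TαVy‖ ≤
      C * M * (⨆ u : Set.Icc (0 : ℝ) ((β 0 ^ 2)⁻¹), α * φ u / (α + (u : ℝ))) *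
        Real.sqrt (∑ k, ∑ j,
          (∫ z : S2, Y k j z * y z ∂(μH[2])) ^ 2 / φ ((β k ^ 2)⁻¹) ^ 2) := by
  set c := fun k j => ∫ z : S2, Y k j z * y z ∂(μH[2])
  set S := ⨆ u : Set.Icc (0 : ℝ) ((β 0 ^ 2)⁻¹), α * φ u / (α + (u : ℝ))
  have hβ : ∀ k, 0 < β k := fun k => hβ0.trans_le (hβmono (Fin.zero_le k))
  have hu : ∀ k, (β k ^ 2)⁻¹ ∈ Set.Icc 0 ((β 0 ^ 2)⁻¹) := fun k =>
    ⟨by positivity, inv_anti₀ (by positivity) (pow_le_pow_left₀ hβ0.le (hβmono (Fin.zero_le k)) 2)⟩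
  have hS : ∀ k, α * φ (β k ^ 2)⁻¹ / (α + (β k ^ 2)⁻¹) ≤ S := fun k =>
    mul_div_add_le_ciSup hα.le hφ0.ge (fun s hs t _ hst => hφmono s t hs hst) (hu k)
  have hφu : ∀ k, 0 < φ (β k ^ 2)⁻¹ := fun k => hφpos _ (by have := hβ k; positivity)
  have hS0 : 0 ≤ S := by
    refine le_trans ?_ (hS 0)
    have := hφu 0
    positivity
  have hquad : ∀ k j, ∑ i, w i * Y k j (x i) * Vy (x i) = h (k / M) * c k j := fun k j => by
    rw [hVy]; exact quadrature_inner_sum_smul hdisc _ k j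
  have hdiff : T0Vy - TαVy =
      ∑ k, ∑ j, (α / (α + (β k ^ 2)⁻¹) * (h (k / M) * c k j)) • Y k j := by
    rw [hT0Vy, hTαVy, ← Finset.sum_sub_distrib]
    refine Finset.sum_congr rfl fun k _ => ?_
    rw [← Finset.sum_sub_distrib]
    refine Finset.sum_congr rfl fun j _ => ?_
    rw [← sub_smul, hquad, ← one_sub_inv_one_add_mul_sq hα.le (hβ k).ne']
    congr 1
    ring
  have hcoeff : ∀ k j, |α / (α + (β k ^ 2)⁻¹) * (h (k / M) * c k j)| ≤
      S * |c k j / φ (β k ^ 2)⁻¹| := fun k j =>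
    have ⟨hh0, hh1⟩ := hh (k / M) (by positivity)
    abs_mul_div_add_mul_le hα.le (hu k).1 (hφu k) (hS k)
      (abs_le.mpr ⟨by linarith, hh1⟩)
  calc ‖T0Vy - TαVy‖
      ≤ C * M * √(∑ k, ∑ j, (α / (α + (β k ^ 2)⁻¹) * (h (k / M) * c k j)) ^ 2) :=
        hdiff ▸ hNikolskii _
    _ ≤ C * M * (S * √(∑ k, ∑ j, (c k j / φ (β k ^ 2)⁻¹) ^ 2)) := by
        gcongr
        exact sqrt_sum_sum_sq_le_mul hS0 hcoeff
    _ = _ := by simp only [c, div_pow, mul_assoc]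

/-- Theorem 4.2 of the paper (in the form established by its proof): the regularization
error `‖(T₀ − T_α) V_M y‖_{C(S²)}` is bounded by
`C M (sup_{u∈[0,β₀⁻²]} αφ(u)/(α+u)) (Σ_{k,j} ⟨Y_{k,j},y⟩²/φ(β_k⁻²)²)^{1/2}`.
Here the surface measure on `S²` is the two-dimensional Hausdorff measure `μH[2]`. -/
theorem regularization_error_bound
    (M N : ℕ) (hM : 1 ≤ M)
    (Y : (k : Fin (M + 1)) → Fin (2 * (k : ℕ) + 1) → C(S2, ℝ))
    (hL2 : ∀ (k k' : Fin (M + 1)) (j : Fin (2 * (k : ℕ) + 1)) (j' : Fin (2 * (k' : ℕ) + 1)),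
      (∫ z : S2, Y k j z * Y k' j' z ∂(μH[2])) =
        if (⟨k, j⟩ : Σ k : Fin (M + 1), Fin (2 * (k : ℕ) + 1)) = ⟨k', j'⟩ then 1 else 0)
    (x : Fin N → S2) (w : Fin N → ℝ) (hw : ∀ i, 0 < w i)
    (hdisc : ∀ (k k' : Fin (M + 1)) (j : Fin (2 * (k : ℕ) + 1)) (j' : Fin (2 * (k' : ℕ) + 1)),
      (∑ i, w i * Y k j (x i) * Y k' j' (x i)) =
        if (⟨k, j⟩ : Σ k : Fin (M + 1), Fin (2 * (k : ℕ) + 1)) = ⟨k', j'⟩ then 1 else 0)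
    (β : Fin (M + 1) → ℝ) (hβ0 : 0 < β 0) (hβmono : Monotone β)
    (α : ℝ) (hα : 0 < α)
    (h : ℝ → ℝ) (hh : ∀ t, 0 ≤ t → h t ∈ Set.Icc (0 : ℝ) 1)
    (φ : ℝ → ℝ) (hφ0 : φ 0 = 0)
    (hφmono : ∀ s t, 0 ≤ s → s ≤ t → φ s ≤ φ t)
    (hφpos : ∀ u, 0 < u → 0 < φ u)
    (C : ℝ) (hC : 0 < C)
    (hNikolskii : ∀ c : (k : Fin (M + 1)) → Fin (2 * (k : ℕ) + 1) → ℝ,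
      ‖∑ k, ∑ j, c k j • Y k j‖ ≤ C * M * Real.sqrt (∑ k, ∑ j, c k j ^ 2))
    (y : C(S2, ℝ))
    (Vy : C(S2, ℝ))
    (hVy : Vy = ∑ k : Fin (M + 1), ∑ j,
      (h (((k : ℕ) : ℝ) / M) * ∫ z : S2, Y k j z * y z ∂(μH[2])) • Y k j)
    (T0Vy TαVy : C(S2, ℝ))
    (hT0Vy : T0Vy = ∑ k, ∑ j, (∑ i, w i * Y k j (x i) * Vy (x i)) • Y k j)
    (hTαVy : TαVy = ∑ k, ∑ j,
      ((1 + α * β k ^ 2)⁻¹ * ∑ i, w i * Y k j (x i) * Vy (x i)) • Y k j) :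
    ‖T0Vy - TαVy‖ ≤
      C * M * (⨆ u : Set.Icc (0 : ℝ) ((β 0 ^ 2)⁻¹), α * φ u / (α + (u : ℝ))) *
        Real.sqrt (∑ k, ∑ j,
          (∫ z : S2, Y k j z * y z ∂(μH[2])) ^ 2 / φ ((β k ^ 2)⁻¹) ^ 2) :=
  regularization_error_bound_general M N Y x w hdisc β hβ0 hβmono α hα h hh φ hφ0 hφmono hφpos C hC
    hNikolskii y Vy hVy T0Vy TαVy hT0Vy hTαVy

end
end

section
/- Under the hypotheses of the abstract Theorem 4.2 setting — continuous Y_{k,j} : S² → ℝ (0 ≤ k ≤ M, 1 ≤ j ≤ 2k+1) orthonormal in L²(S²) and discretely orthonormal with respect to nodes x_i ∈ S² and weights w_i > 0; weights 0 < β_0 ≤ … ≤ β_M; α > 0; filter h : [0,∞) → [0,1]; nondecreasing φ : [0,∞) → [0,∞) with φ(0) = 0 and φ > 0 on (0,∞); a constant C > 0 with ‖Σ_{k,j} c_{k,j} Y_{k,j}‖_{C(S²)} ≤ C M (Σ c²)^{1/2} for all coefficients; V_M y = Σ_{k=0}^M h(k/M) Σ_j ⟨Y_{k,j}, y⟩_{L²(S²)}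 Y_{k,j}; T_α g = Σ_{k,j} (1+αβ_k²)^{-1} (Σ_i w_i Y_{k,j}(x_i) g(x_i)) Y_{k,j} — suppose additionally that y, y^ε ∈ C(S²) satisfy ‖y − y^ε‖_{C(S²)} ≤ δ and ‖y − V_M y‖_{C(S²)} ≤ δ for some δ ≥ 0. Then ‖y − T_α y^ε‖_{C(S²)} ≤ δ + C M (sup_{u∈[0,β_0^{-2}]} α φ(u)/(α+u)) (Σ_{k=0}^M Σ_{j=1}^{2k+1} ⟨Y_{k,j}, y⟩²_{L²(S²)}/φ(β_k^{-2})²)^{1/2} + 2 ‖T_α‖ δ, where ‖T_α‖ denotes the operator norm of T_α as an operator from C(S²) to C(S²). -/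
/-!
Split `y - T_α yᵉ = (y - V_M y) + (V_M y - T_α V_M y) + T_α (V_M y - y) + T_α (y - yᵉ)`.
The first and last two terms are at most `δ` and `‖T_α‖ δ` each. The middle term is the
regularization error: by discrete orthonormality `T_α` acts on the expansion of `V_M y` by
multiplying the coefficients by `(1 + α β_k²)⁻¹`, so `V_M y - T_α V_M y` has coefficients
`α / (α + u_k) · h(k/M) ⟨Y_{k,j}, y⟩` with `u_k = β_k⁻²`. Writing `α / (α + u_k)` as
`(α φ(u_k) / (α + u_k)) / φ(u_k)` bounds them by the supremum times `|⟨Y_{k,j}, y⟩| / φ(u_k)`,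
and the Nikolskii inequality turns this coefficient bound into the bound in `C(S²)`.
-/

open scoped BigOperators
open MeasureTheory

noncomputable section

theorem norm_sub_map_le_of_approx {𝕜 E : Type*} [NontriviallyNormedField 𝕜]
    [SeminormedAddCommGroup E] [NormedSpace 𝕜 E] (T : E →L[𝕜] E) {y yε v : E} {δ : ℝ}
    (hnoise : ‖y - yε‖ ≤ δ) (happrox : ‖y - v‖ ≤ δ) :
    ‖y - T yε‖ ≤ δ + ‖v - T v‖ + 2 * ‖T‖ * δ := by
  have hsplit : y - T yε = (y - v) + (v - T v) + T (v - y) + T (y - yε) := by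
    rw [map_sub, map_sub]
    abel
  have hT₁ : ‖T (v - y)‖ ≤ ‖T‖ * δ :=
    (T.le_opNorm _).trans (by rw [norm_sub_rev v y]; gcongr)
  have hT₂ : ‖T (y - yε)‖ ≤ ‖T‖ * δ := (T.le_opNorm _).trans (by gcongr)
  calc ‖y - T yε‖ ≤ ‖y - v‖ + ‖v - T v‖ + ‖T (v - y)‖ + ‖T (y - yε)‖ := by
        rw [hsplit]; exact norm_add₄_le
    _ ≤ δ + ‖v - T v‖ + 2 * ‖T‖ * δ := by linarith

theorem bddAbove_range_mul_div_add_s13 {φ : ℝ → ℝ} {α r : ℝ} (hα : 0 < α)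
    (hφmono : ∀ s t, 0 ≤ s → s ≤ t → φ s ≤ φ t) (hr : 0 ≤ φ r) :
    BddAbove (Set.range fun u : Set.Icc (0 : ℝ) r => α * φ u / (α + (u : ℝ))) := by
  refine ⟨φ r, ?_⟩
  rintro _ ⟨⟨u, hu₀, hur⟩, rfl⟩
  have hfrac : α / (α + u) ≤ 1 := div_le_one_of_le₀ (by linarith) (by linarith)
  calc α * φ u / (α + u) = α / (α + u) * φ u := by ring
    _ ≤ α / (α + u) * φ r := by gcongr; exact hφmono u r hu₀ hur
    _ ≤ φ r := mul_le_of_le_one_left hr hfrac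

theorem abs_div_add_mul_mul_le {α u φu S t c : ℝ} (hα : 0 < α) (hu : 0 < u) (hφu : 0 < φu)
    (ht : |t| ≤ 1) (hS : α * φu / (α + u) ≤ S) :
    |α / (α + u) * t * c| ≤ S * (|c| / φu) := by
  have hfrac : 0 < α / (α + u) := by positivity
  calc |α / (α + u) * t * c| = α / (α + u) * |t| * |c| := by
        rw [abs_mul, abs_mul, abs_of_pos hfrac]
    _ ≤ α / (α + u) * |c| := by gcongr; exact mul_le_of_le_one_right hfrac.le ht
    _ = α * φu / (α + u) * (|c| / φu) := by field_simp
    _ ≤ S * (|c| / φu) := by gcongr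

section Expansions

variable {ι : Type*} [Fintype ι] {κ : ι → Type*} [∀ k, Fintype (κ k)]

theorem sqrt_sum_sum_sq_le_of_abs_le {d e : ∀ k, κ k → ℝ} {S : ℝ} (hS : 0 ≤ S)
    (hde : ∀ k j, |d k j| ≤ S * e k j) :
    √(∑ k, ∑ j, d k j ^ 2) ≤ S * √(∑ k, ∑ j, e k j ^ 2) := by
  have hsq : ∑ k, ∑ j, d k j ^ 2 ≤ S ^ 2 * ∑ k, ∑ j, e k j ^ 2 := by
    simp only [Finset.mul_sum, ← mul_pow, ← sq_abs (d _ _)]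
    gcongr with k _ j _
    · exact hde k j
  calc √(∑ k, ∑ j, d k j ^ 2) ≤ √(S ^ 2 * ∑ k, ∑ j, e k j ^ 2) := Real.sqrt_le_sqrt hsq
    _ = S * √(∑ k, ∑ j, e k j ^ 2) := by rw [Real.sqrt_mul (sq_nonneg S), Real.sqrt_sq hS]

variable {X : Type*} [TopologicalSpace X] [DecidableEq (Σ k, κ k)] {N : ℕ}
  {Y : ∀ k, κ k → C(X, ℝ)} {x : Fin N → X} {w : Fin N → ℝ}

theorem discrete_coeff_sum_smul
    (hdisc : ∀ (k k' : ι) (j : κ k) (j' : κ k'),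
      (∑ i, w i * Y k j (x i) * Y k' j' (x i)) =
        if (⟨k, j⟩ : Σ k, κ k) = ⟨k', j'⟩ then 1 else 0)
    (a : ∀ k, κ k → ℝ) (k : ι) (j : κ k) :
    ∑ i, w i * Y k j (x i) * (∑ k', ∑ j', a k' j' • Y k' j') (x i) = a k j := by
  calc ∑ i, w i * Y k j (x i) * (∑ k', ∑ j', a k' j' • Y k' j') (x i)
      = ∑ k', ∑ j', a k' j' * ∑ i, w i * Y k j (x i) * Y k' j' (x i) := by
        simp only [ContinuousMap.coe_sum, Finset.sum_apply, ContinuousMap.coe_smul,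
          Pi.smul_apply, smul_eq_mul, Finset.mul_sum]
        rw [Finset.sum_comm]
        refine Finset.sum_congr rfl fun k' _ => ?_
        rw [Finset.sum_comm]
        refine Finset.sum_congr rfl fun j' _ => Finset.sum_congr rfl fun i _ => ?_
        ring
    _ = ∑ p : Σ k, κ k, if (⟨k, j⟩ : Σ k, κ k) = p then a p.1 p.2 else 0 := by
        simp only [hdisc, mul_ite, mul_one, mul_zero, Fintype.sum_sigma]
    _ = a k j := by simp

theorem sub_apply_sum_smul_eq
    (hdisc : ∀ (k k' : ι) (j : κ k) (j' : κ k'),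
      (∑ i, w i * Y k j (x i) * Y k' j' (x i)) =
        if (⟨k, j⟩ : Σ k, κ k) = ⟨k', j'⟩ then 1 else 0)
    {T : C(X, ℝ) → C(X, ℝ)} {b : ι → ℝ}
    (hT : ∀ g : C(X, ℝ), T g = ∑ k, ∑ j, (b k * ∑ i, w i * Y k j (x i) * g (x i)) • Y k j)
    (a : ∀ k, κ k → ℝ) :
    (∑ k, ∑ j, a k j • Y k j) - T (∑ k, ∑ j, a k j • Y k j) =
      ∑ k, ∑ j, ((1 - b k) * a k j) • Y k j := by
  simp only [hT, discrete_coeff_sum_smul hdisc, ← Finset.sum_sub_distrib, ← sub_smul]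
  congr! 3
  ring

end Expansions

/-- The surface measure on `S²` is the two-dimensional Hausdorff measure `μH[2]`. -/
theorem combined_error_bound_general
    (M N : ℕ)
    (Y : (k : Fin (M + 1)) → Fin (2 * (k : ℕ) + 1) → C(S2, ℝ))
    (x : Fin N → S2) (w : Fin N → ℝ)
    (hdisc : ∀ (k k' : Fin (M + 1)) (j : Fin (2 * (k : ℕ) + 1)) (j' : Fin (2 * (k' : ℕ) + 1)),
      (∑ i, w i * Y k j (x i) * Y k' j' (x i)) =
        if (⟨k, j⟩ : Σ k : Fin (M + 1), Fin (2 * (k : ℕ) + 1)) = ⟨k', j'⟩ then 1 else 0)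
    (β : Fin (M + 1) → ℝ) (hβ0 : 0 < β 0) (hβmono : Monotone β)
    (α : ℝ) (hα : 0 < α)
    (h : ℝ → ℝ) (hh : ∀ t, 0 ≤ t → h t ∈ Set.Icc (0 : ℝ) 1)
    (φ : ℝ → ℝ)
    (hφmono : ∀ s t, 0 ≤ s → s ≤ t → φ s ≤ φ t)
    (hφpos : ∀ u, 0 < u → 0 < φ u)
    (C : ℝ) (hC : 0 < C)
    (hNikolskii : ∀ c : (k : Fin (M + 1)) → Fin (2 * (k : ℕ) + 1) → ℝ,
      ‖∑ k, ∑ j, c k j • Y k j‖ ≤ C * M * Real.sqrt (∑ k, ∑ j, c k j ^ 2))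
    (y yε : C(S2, ℝ))
    (Vy : C(S2, ℝ))
    (hVy : Vy = ∑ k : Fin (M + 1), ∑ j,
      (h (((k : ℕ) : ℝ) / M) * ∫ z : S2, Y k j z * y z ∂(μH[2])) • Y k j)
    (T : C(S2, ℝ) →L[ℝ] C(S2, ℝ))
    (hT : ∀ g : C(S2, ℝ), T g = ∑ k, ∑ j,
      ((1 + α * β k ^ 2)⁻¹ * ∑ i, w i * Y k j (x i) * g (x i)) • Y k j)
    (δ : ℝ)
    (hnoise : ‖y - yε‖ ≤ δ)
    (happrox : ‖y - Vy‖ ≤ δ) :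
    ‖y - T yε‖ ≤
      δ + C * M * (⨆ u : Set.Icc (0 : ℝ) ((β 0 ^ 2)⁻¹), α * φ u / (α + (u : ℝ))) *
          Real.sqrt (∑ k, ∑ j,
            (∫ z : S2, Y k j z * y z ∂(μH[2])) ^ 2 / φ ((β k ^ 2)⁻¹) ^ 2)
        + 2 * ‖T‖ * δ := by
  set c : (k : Fin (M + 1)) → Fin (2 * (k : ℕ) + 1) → ℝ :=
    fun k j => ∫ z : S2, Y k j z * y z ∂(μH[2])
  set S := ⨆ u : Set.Icc (0 : ℝ) ((β 0 ^ 2)⁻¹), α * φ u / (α + (u : ℝ))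
  have hβ : ∀ k, 0 < β k := fun k => hβ0.trans_le (hβmono (Fin.zero_le k))
  have hu : ∀ k, 0 < (β k ^ 2)⁻¹ := fun k => inv_pos.2 (pow_pos (hβ k) 2)
  have hu_mem : ∀ k, (β k ^ 2)⁻¹ ∈ Set.Icc (0 : ℝ) ((β 0 ^ 2)⁻¹) := fun k =>
    ⟨(hu k).le, inv_anti₀ (by positivity) (pow_le_pow_left₀ hβ0.le (hβmono (Fin.zero_le k)) 2)⟩
  have hSle : ∀ k, α * φ (β k ^ 2)⁻¹ / (α + (β k ^ 2)⁻¹) ≤ S := fun k =>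
    le_ciSup (bddAbove_range_mul_div_add_s13 hα hφmono (hφpos _ (hu 0)).le) ⟨_, hu_mem k⟩
  have hS : 0 ≤ S := by
    have := hφpos _ (hu 0)
    exact (by positivity : 0 ≤ α * φ (β 0 ^ 2)⁻¹ / (α + (β 0 ^ 2)⁻¹)).trans (hSle 0)
  have hh_abs : ∀ k : Fin (M + 1), |h (((k : ℕ) : ℝ) / M)| ≤ 1 := fun k => by
    obtain ⟨h0, h1⟩ := hh (((k : ℕ) : ℝ) / M) (by positivity)
    exact abs_le.2 ⟨by linarith, h1⟩
  have hmid : Vy - T Vy =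
      ∑ k, ∑ j, (α / (α + (β k ^ 2)⁻¹) * h (((k : ℕ) : ℝ) / M) * c k j) • Y k j := by
    rw [hVy, sub_apply_sum_smul_eq hdisc hT]
    simp only [one_sub_inv_one_add_mul_sq hα.le (hβ _).ne', mul_assoc]
    rfl
  have hmid_le : ‖Vy - T Vy‖ ≤ C * M * (S * √(∑ k, ∑ j, c k j ^ 2 / φ ((β k ^ 2)⁻¹) ^ 2)) := by
    rw [hmid]
    refine (hNikolskii _).trans (mul_le_mul_of_nonneg_left ?_ (by positivity))
    calc _ ≤ S * √(∑ k, ∑ j, (|c k j| / φ ((β k ^ 2)⁻¹)) ^ 2) :=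
          sqrt_sum_sum_sq_le_of_abs_le hS fun k j => abs_div_add_mul_mul_le hα
            (hu k) (hφpos _ (hu k)) (hh_abs k) (hSle k)
      _ = S * √(∑ k, ∑ j, c k j ^ 2 / φ ((β k ^ 2)⁻¹) ^ 2) := by simp only [div_pow, sq_abs]
  linarith [norm_sub_map_le_of_approx T hnoise happrox]

/-- The paper's combined error bound: if `‖y − yᵉ‖ ≤ δ` and `‖y − V_M y‖ ≤ δ`, then
`‖y − T_α yᵉ‖ ≤ δ + C M (sup_{u∈[0,β₀⁻²]} αφ(u)/(α+u)) (Σ_{k,j} ⟨Y_{k,j},y⟩²/φ(β_k⁻²)²)^{1/2}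
 + 2‖T_α‖ δ`, where `‖T_α‖` is the operator norm of `T_α : C(S²) → C(S²)`.
Here the surface measure on `S²` is the two-dimensional Hausdorff measure `μH[2]`. -/
theorem combined_error_bound
    (M N : ℕ) (hM : 1 ≤ M)
    (Y : (k : Fin (M + 1)) → Fin (2 * (k : ℕ) + 1) → C(S2, ℝ))
    (hL2 : ∀ (k k' : Fin (M + 1)) (j : Fin (2 * (k : ℕ) + 1)) (j' : Fin (2 * (k' : ℕ) + 1)),
      (∫ z : S2, Y k j z * Y k' j' z ∂(μH[2])) =
        if (⟨k, j⟩ : Σ k : Fin (M + 1), Fin (2 * (k : ℕ) + 1)) = ⟨k', j'⟩ then 1 else 0)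
    (x : Fin N → S2) (w : Fin N → ℝ) (hw : ∀ i, 0 < w i)
    (hdisc : ∀ (k k' : Fin (M + 1)) (j : Fin (2 * (k : ℕ) + 1)) (j' : Fin (2 * (k' : ℕ) + 1)),
      (∑ i, w i * Y k j (x i) * Y k' j' (x i)) =
        if (⟨k, j⟩ : Σ k : Fin (M + 1), Fin (2 * (k : ℕ) + 1)) = ⟨k', j'⟩ then 1 else 0)
    (β : Fin (M + 1) → ℝ) (hβ0 : 0 < β 0) (hβmono : Monotone β)
    (α : ℝ) (hα : 0 < α)
    (h : ℝ → ℝ) (hh : ∀ t, 0 ≤ t → h t ∈ Set.Icc (0 : ℝ) 1)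
    (φ : ℝ → ℝ) (hφ0 : φ 0 = 0)
    (hφmono : ∀ s t, 0 ≤ s → s ≤ t → φ s ≤ φ t)
    (hφpos : ∀ u, 0 < u → 0 < φ u)
    (C : ℝ) (hC : 0 < C)
    (hNikolskii : ∀ c : (k : Fin (M + 1)) → Fin (2 * (k : ℕ) + 1) → ℝ,
      ‖∑ k, ∑ j, c k j • Y k j‖ ≤ C * M * Real.sqrt (∑ k, ∑ j, c k j ^ 2))
    (y yε : C(S2, ℝ))
    (Vy : C(S2, ℝ))
    (hVy : Vy = ∑ k : Fin (M + 1), ∑ j,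
      (h (((k : ℕ) : ℝ) / M) * ∫ z : S2, Y k j z * y z ∂(μH[2])) • Y k j)
    (T : C(S2, ℝ) →L[ℝ] C(S2, ℝ))
    (hT : ∀ g : C(S2, ℝ), T g = ∑ k, ∑ j,
      ((1 + α * β k ^ 2)⁻¹ * ∑ i, w i * Y k j (x i) * g (x i)) • Y k j)
    (δ : ℝ) (hδ : 0 ≤ δ)
    (hnoise : ‖y - yε‖ ≤ δ)
    (happrox : ‖y - Vy‖ ≤ δ) :
    ‖y - T yε‖ ≤
      δ + C * M * (⨆ u : Set.Icc (0 : ℝ) ((β 0 ^ 2)⁻¹), α * φ u / (α + (u : ℝ))) *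
          Real.sqrt (∑ k, ∑ j,
            (∫ z : S2, Y k j z * y z ∂(μH[2])) ^ 2 / φ ((β k ^ 2)⁻¹) ^ 2)
        + 2 * ‖T‖ * δ :=
  combined_error_bound_general M N Y x w hdisc β hβ0 hβmono α hα h hh φ hφmono hφpos C hC hNikolskii
    y yε Vy hVy T hT δ hnoise happrox

end
end
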